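/- Assume ω > 0, ε ≥ 0, β < 0 and α(ω+ε) < ωε, and set x^e = √((α − ωε/(ω+ε))/β), y^e = (ε/(ω+ε))·x^e. Then the Hessian matrix of the potential V at the points ±(x^e, y^e) has strictly negative determinant, i.e. one positive and one negative eigenvalue; in particular ±(x^e, y^e) are two index-1 saddle points of V. -/

import Mathlib

/-!
At an equilibrium `β x² = α − ωε/(ω+ε)` the Hessian determinant collapses to
`2 (α(ω+ε) − ωε)`, which is negative by assumption; the Hessian only depends on `x²`, so the
same holds at `−x`. A real monic quadratic with negative constant term has one positive and one
negative root, so the characteristic polynomial of the Hessian factors accordingly.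
-/

open Polynomial

/-- Hessian matrix of the potential
`V(x,y) = −(α/2)x² + (β/4)x⁴ + (ω/2)y² + (ε/2)(x−y)²`
at a point with first coordinate `x`. -/
noncomputable def HessV (α β ω ε x : ℝ) : Matrix (Fin 2) (Fin 2) ℝ :=
  !![-α + 3 * β * x ^ 2 + ε, -ε; -ε, ω + ε]

theorem Polynomial.exists_pos_neg_factorization_of_const_neg {t d : ℝ} (hd : d < 0) :
    ∃ a b : ℝ, 0 < a ∧ b < 0 ∧ X ^ 2 - C t * X + C d = (X - C a) * (X - C b) := by
  set s := √(t ^ 2 - 4 * d)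
  have hs : s ^ 2 = t ^ 2 - 4 * d := Real.sq_sqrt (by nlinarith [sq_nonneg t])
  have hts : |t| < s := Real.lt_sqrt (abs_nonneg t) |>.mpr (by rw [sq_abs]; linarith)
  obtain ⟨hneg, hpos⟩ := abs_lt.mp hts
  refine ⟨(t + s) / 2, (t - s) / 2, by linarith, by linarith, ?_⟩
  have hsum : C t = C ((t + s) / 2) + C ((t - s) / 2) := by rw [← C_add]; ring_nf
  have hprod : C d = C ((t + s) / 2) * C ((t - s) / 2) := by
    rw [← C_mul]; congr 1; linear_combination (1 / 4 : ℝ) * hs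
  rw [hsum, hprod]
  ring

theorem Matrix.exists_charpoly_eq_pos_neg_of_det_neg {A : Matrix (Fin 2) (Fin 2) ℝ}
    (h : A.det < 0) :
    ∃ a b : ℝ, 0 < a ∧ b < 0 ∧ A.charpoly = (X - C a) * (X - C b) := by
  rw [A.charpoly_fin_two]
  exact exists_pos_neg_factorization_of_const_neg h

theorem HessV_neg (α β ω ε x : ℝ) : HessV α β ω ε (-x) = HessV α β ω ε x := by
  simp only [HessV, neg_sq]

theorem det_HessV_of_equilibrium {α β ω ε x : ℝ}
    (hx : β * x ^ 2 * (ω + ε) = α * (ω + ε) - ω * ε) :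
    (HessV α β ω ε x).det = 2 * (α * (ω + ε) - ω * ε) := by
  rw [HessV, Matrix.det_fin_two_of]
  linear_combination 3 * hx

theorem nontrivial_equilibria_index_one_saddles_general (α β ω ε : ℝ)
    (hω : 0 < ω) (hε : 0 ≤ ε) (hβ : β < 0)
    (h : α * (ω + ε) < ω * ε)
    (xe : ℝ)
    (hxe : xe = Real.sqrt ((α - ω * ε / (ω + ε)) / β)) :
    (HessV α β ω ε xe).det < 0 ∧
    (HessV α β ω ε (-xe)).det < 0 ∧
    (∃ a b : ℝ, 0 < a ∧ b < 0 ∧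
      (HessV α β ω ε xe).charpoly = (X - C a) * (X - C b)) ∧
    (∃ a b : ℝ, 0 < a ∧ b < 0 ∧
      (HessV α β ω ε (-xe)).charpoly = (X - C a) * (X - C b)) := by
  have hsum : 0 < ω + ε := by linarith
  have hnum : α - ω * ε / (ω + ε) < 0 := by
    rw [sub_neg, lt_div_iff₀ hsum]; exact h
  have hequil : β * xe ^ 2 * (ω + ε) = α * (ω + ε) - ω * ε := by
    rw [hxe, Real.sq_sqrt (div_pos_of_neg_of_neg hnum hβ).le, mul_div_cancel₀ _ hβ.ne, sub_mul,
      div_mul_cancel₀ _ hsum.ne']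
  have hdet : (HessV α β ω ε xe).det < 0 := by
    rw [det_HessV_of_equilibrium hequil]; linarith
  rw [HessV_neg]
  have hspec := Matrix.exists_charpoly_eq_pos_neg_of_det_neg hdet
  exact ⟨hdet, hdet, hspec, hspec⟩

theorem nontrivial_equilibria_index_one_saddles (α β ω ε : ℝ)
    (hω : 0 < ω) (hε : 0 ≤ ε) (hβ : β < 0)
    (h : α * (ω + ε) < ω * ε)
    (xe ye : ℝ)
    (hxe : xe = Real.sqrt ((α - ω * ε / (ω + ε)) / β))
    (hye : ye = ε / (ω + ε) * xe) :
    (HessV α β ω ε xe).det < 0 ∧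
    (HessV α β ω ε (-xe)).det < 0 ∧
    (∃ a b : ℝ, 0 < a ∧ b < 0 ∧
      (HessV α β ω ε xe).charpoly = (X - C a) * (X - C b)) ∧
    (∃ a b : ℝ, 0 < a ∧ b < 0 ∧
      (HessV α β ω ε (-xe)).charpoly = (X - C a) * (X - C b)) :=
  nontrivial_equilibria_index_one_saddles_general α β ω ε hω hε hβ h xe hxe
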